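/- For any synchronous quantum correlation p(a,b|x,x') = (1/d)tr(E^x_a E^{x'}_b) from {0,1,2} to {0,1} with w(x,x') = p(1,1|x,x'), at most one of the four Bell inequalities J₀ ≤ 1, J₁ ≥ 0, J₂ ≥ 0, J₃ ≥ 0 can be violated, where 1 − J₀ = (1/4)(1 + m_{01} + m_{02} + m_{12}), J₁ = (1/4)(1 − m_{01} − m_{02} + m_{12}), J₂ = (1/4)(1 − m_{01} + m_{02} − m_{12}), J₃ = (1/4)(1 + m_{01} − m_{02} − m_{12}), and m_{xx'} = (1/d)tr(M_x M_{x'}) with M_x = E^x_0 − E^x_1. Concretely: the sum of any two of the quantities (1−J₀), J₁, J₂, J₃ is nonnegative, hence at most one can be negative. -/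
import Mathlib


open Matrix

lemma trace_sq_re_nonneg {d : ℕ} (A : Matrix (Fin d) (Fin d) ℂ)
    (hA : A.IsHermitian) : 0 ≤ ((A * A).trace).re := by
  have h : A * A = Aᴴ * A := by rw [hA.eq]
  rw [h]
  have : ((Aᴴ * A).trace) = ∑ j, ∑ i, (starRingEnd ℂ) (A i j) * A i j := by
    simp [Matrix.trace, Matrix.mul_apply, Matrix.conjTranspose_apply, Matrix.diag]
  rw [this, Complex.re_sum]
  apply Finset.sum_nonneg
  intro j _
  rw [Complex.re_sum]
  apply Finset.sum_nonneg
  intro i _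
  rw [mul_comm, Complex.mul_conj]
  simp [Complex.normSq_nonneg]

theorem stmt_19
    {d : ℕ} (hd : 1 ≤ d)
    (E : Fin 3 → Fin 2 → Matrix (Fin d) (Fin d) ℂ)
    (hherm : ∀ x y, (E x y).IsHermitian)
    (hidem : ∀ x y, E x y * E x y = E x y)
    (hsum : ∀ x, E x 0 + E x 1 = 1)
    (M : Fin 3 → Matrix (Fin d) (Fin d) ℂ)
    (hM : ∀ x, M x = E x 0 - E x 1)
    (m : Fin 3 → Fin 3 → ℝ)
    (hm : ∀ x x', m x x' = (1 / d) * ((M x * M x').trace).re)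
    (J : Fin 4 → ℝ)
    (hJ0 : 1 - J 0 = (1 / 4) * (1 + m 0 1 + m 0 2 + m 1 2))
    (hJ1 : J 1 = (1 / 4) * (1 - m 0 1 - m 0 2 + m 1 2))
    (hJ2 : J 2 = (1 / 4) * (1 - m 0 1 + m 0 2 - m 1 2))
    (hJ3 : J 3 = (1 / 4) * (1 + m 0 1 - m 0 2 - m 1 2)) :
    (0 ≤ (1 - J 0) + J 1) ∧ (0 ≤ (1 - J 0) + J 2) ∧ (0 ≤ (1 - J 0) + J 3) ∧
    (0 ≤ J 1 + J 2) ∧ (0 ≤ J 1 + J 3) ∧ (0 ≤ J 2 + J 3) ∧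
    ¬ ((1 - J 0 < 0 ∧ J 1 < 0) ∨ (1 - J 0 < 0 ∧ J 2 < 0) ∨ (1 - J 0 < 0 ∧ J 3 < 0) ∨
       (J 1 < 0 ∧ J 2 < 0) ∨ (J 1 < 0 ∧ J 3 < 0) ∨ (J 2 < 0 ∧ J 3 < 0)) := by
  have hdpos : (0 : ℝ) < d := by exact_mod_cast hd
  -- M x is hermitian
  have hMherm : ∀ x, (M x).IsHermitian := by
    intro x; rw [hM x]
    exact (hherm x 0).sub (hherm x 1)
  -- M x ^ 2 = 1
  have hMsq : ∀ x, M x * M x = 1 := by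
    intro x
    have h01 : E x 0 * E x 1 = 0 := by
      have h1 : E x 1 = 1 - E x 0 := by
        have := hsum x; linear_combination (norm := noncomm_ring) this
      rw [h1, mul_sub, mul_one, hidem x 0, sub_self]
    have h10 : E x 1 * E x 0 = 0 := by
      have h1 : E x 1 = 1 - E x 0 := by
        have := hsum x; linear_combination (norm := noncomm_ring) this
      rw [h1, sub_mul, one_mul, hidem x 0, sub_self]
    rw [hM x]
    have : (E x 0 - E x 1) * (E x 0 - E x 1)
        = E x 0 * E x 0 - E x 0 * E x 1 - E x 1 * E x 0 + E x 1 * E x 1 := by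
      noncomm_ring
    rw [this, hidem x 0, hidem x 1, h01, h10]
    rw [← hsum x]; noncomm_ring
  have hmm : ∀ x, m x x = 1 := by
    intro x
    rw [hm, hMsq x, Matrix.trace_one]
    simp
    field_simp
  -- bounds on m
  have hkey : ∀ (x y : Fin 3) (s : ℝ), s = 1 ∨ s = -1 → 0 ≤ 1 + s * m x y := by
    intro x y s hs
    set A : Matrix (Fin d) (Fin d) ℂ := M x + (s : ℂ) • M y with hA
    have hAherm : A.IsHermitian := by
      apply (hMherm x).add
      rw [Matrix.IsHermitian, Matrix.conjTranspose_smul, (hMherm y).eq,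
        Complex.star_def, Complex.conj_ofReal]
    have h0 := trace_sq_re_nonneg A hAherm
    have hcomm : (M y * M x).trace = (M x * M y).trace := Matrix.trace_mul_comm _ _
    have hexp : A * A = M x * M x + (s:ℂ) • (M x * M y) + (s:ℂ) • (M y * M x)
        + ((s:ℂ) * s) • (M y * M y) := by
      rw [hA]
      simp only [Matrix.add_mul, Matrix.mul_add, Matrix.smul_mul, Matrix.mul_smul,
        smul_smul, smul_add]
      abel
    have hs2 : (s:ℂ) * s = 1 := by rcases hs with h | h <;> rw [h] <;> norm_num
    have htr : ((A * A).trace).re = 2 * d + 2 * s * ((M x * M y).trace).re := by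
      rw [hexp, Matrix.trace_add, Matrix.trace_add, Matrix.trace_add,
        Matrix.trace_smul, Matrix.trace_smul, Matrix.trace_smul, hs2, one_smul,
        hcomm, hMsq x, hMsq y, Matrix.trace_one]
      simp [Complex.add_re, Complex.ofReal_mul]
      ring
    rw [htr] at h0
    have hmxy : m x y = (1 / d) * ((M x * M y).trace).re := hm x y
    rw [hmxy, show (1:ℝ) + s * (1 / ↑d * ((M x * M y).trace).re)
        = (↑d + s * ((M x * M y).trace).re) / ↑d by field_simp]
    apply div_nonneg _ hdpos.le
    linarith
  have h01p := hkey 0 1 1 (Or.inl rfl)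
  have h01m := hkey 0 1 (-1) (Or.inr rfl)
  have h02p := hkey 0 2 1 (Or.inl rfl)
  have h02m := hkey 0 2 (-1) (Or.inr rfl)
  have h12p := hkey 1 2 1 (Or.inl rfl)
  have h12m := hkey 1 2 (-1) (Or.inr rfl)
  refine ⟨by linarith, by linarith, by linarith, by linarith, by linarith, by linarith, ?_⟩
  rintro (⟨h1, h2⟩ | ⟨h1, h2⟩ | ⟨h1, h2⟩ | ⟨h1, h2⟩ | ⟨h1, h2⟩ | ⟨h1, h2⟩) <;> linarith
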